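/- Guarded systems are closed under sequential composition: ({in.r};[r]) ; ({in.r'};[r']) = {in.r''};[r''] where r'' x z = in.r x ∧ (∀ y, r x y → in.r' y) ∧ (r ∘ r') x z. -/
import Mathlib


variable {A B C : Type*}

def assert {A : Type*} (p : Set A) : Set A → Set A := fun q => p ∩ q

def demonic {A B : Type*} (r : A → B → Prop) : Set B → Set A :=
  fun q => {σ | ∀ σ', r σ σ' → σ' ∈ q}

def inRel {A B : Type*} (r : A → B → Prop) : Set A := {x | ∃ y, r x y}

def relComp (r : A → B → Prop) (r' : B → C → Prop) : A → C → Prop :=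
  fun x z => ∃ y, r x y ∧ r' y z

theorem guarded_comp (r : A → B → Prop) (r' : B → C → Prop) :
    (assert (inRel r) ∘ demonic r) ∘ (assert (inRel r') ∘ demonic r') =
    assert (inRel (fun x z => x ∈ inRel r ∧ (∀ y, r x y → y ∈ inRel r') ∧ relComp r r' x z)) ∘
      demonic (fun x z => x ∈ inRel r ∧ (∀ y, r x y → y ∈ inRel r') ∧ relComp r r' x z) := by
  funext q
  ext x
  simp only [Function.comp, assert, demonic, inRel, relComp, Set.mem_inter_iff,
    Set.mem_setOf_eq]
  constructor
  · rintro ⟨⟨y0, hy0⟩, h⟩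
    have hin : ∀ y, r x y → ∃ z, r' y z := fun y hy => (h y hy).1
    obtain ⟨z0, hz0⟩ := hin y0 hy0
    refine ⟨⟨z0, ⟨y0, hy0⟩, hin, y0, hy0, hz0⟩, ?_⟩
    rintro z ⟨_, _, y, hy, hz⟩
    exact (h y hy).2 z hz
  · rintro ⟨⟨z0, ⟨y0, hy0⟩, hin, _⟩, h⟩
    refine ⟨⟨y0, hy0⟩, fun y hy => ⟨hin y hy, fun z hz => h z ⟨⟨y0, hy0⟩, hin, y, hy, hz⟩⟩⟩
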